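/- For every positive integer n, there is a bijection between the set of partitions of n whose smallest part occurs at least twice and the set of partitions of 2n whose largest part minus smallest part equals n (given by adding n to one copy of the smallest part). -/

import Mathlib

/-!
Let `s` be the smallest part of a partition of `n` and let `k ≥ n`. Replacing one copy of `s`
by `s + k` gives a partition of `n + k` with largest part `s + k` (every other part is at most
`n < s + k`) and, as `s` occurs at least twice, smallest part still `s`. Conversely, in a
partition of `n + k` whose largest part is `s + k`, replacing one copy of it by `s` gives a
partition of `n` whose smallest part `s` occurs twice, since `s + k ≠ s` for `k > 0`. The two
replacements undo each other.
-/

open Multiset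

namespace Nat.Partition

variable {n m k a b : ℕ}

-- The size `m` is a parameter fixed by an equation, so that e.g. `(2 * n).Partition` is
-- reached without casting from `(n + n).Partition`.
def replacePart (π : n.Partition) (ha : a ∈ π.parts) (hb : 0 < b) (h : n + b = m + a) :
    m.Partition where
  parts := b ::ₘ π.parts.erase a
  parts_pos hi := (mem_cons.1 hi).elim (· ▸ hb) (π.parts_pos <| mem_of_mem_erase ·)
  parts_sum := by
    have hsum : a + (π.parts.erase a).sum = n := by
      simpa [π.parts_sum] using congrArg sum (cons_erase ha)
    rw [sum_cons]
    omega

def HasRepeatedSmallestPart (π : n.Partition) : Prop :=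
  ∃ s ∈ π.parts, (∀ t ∈ π.parts, s ≤ t) ∧ 2 ≤ π.parts.count s

def LargestExceedsSmallestBy (k : ℕ) (π : m.Partition) : Prop :=
  ∃ M ∈ π.parts, ∃ s ∈ π.parts,
    (∀ t ∈ π.parts, t ≤ M) ∧ (∀ t ∈ π.parts, s ≤ t) ∧ M = s + k

namespace HasRepeatedSmallestPart

variable {π : n.Partition} (h : π.HasRepeatedSmallestPart)

noncomputable def smallest : ℕ := h.choose

theorem smallest_mem : h.smallest ∈ π.parts := h.choose_spec.1

theorem smallest_le {t : ℕ} (ht : t ∈ π.parts) : h.smallest ≤ t := h.choose_spec.2.1 t ht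

theorem two_le_count_smallest : 2 ≤ π.parts.count h.smallest := h.choose_spec.2.2

theorem smallest_eq {s : ℕ} (hs : s ∈ π.parts) (hmin : ∀ t ∈ π.parts, s ≤ t) :
    h.smallest = s :=
  le_antisymm (h.smallest_le hs) (hmin _ h.smallest_mem)

noncomputable def addToSmallest (hm : n + k = m) : m.Partition :=
  π.replacePart h.smallest_mem (b := h.smallest + k)
    (Nat.add_pos_left (π.parts_pos h.smallest_mem) k) (by omega)

theorem parts_addToSmallest (hm : n + k = m) :
    (h.addToSmallest hm).parts = (h.smallest + k) ::ₘ π.parts.erase h.smallest :=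
  rfl

theorem smallest_mem_addToSmallest (hm : n + k = m) :
    h.smallest ∈ (h.addToSmallest hm).parts := by
  have hcount := h.two_le_count_smallest
  rw [parts_addToSmallest]
  refine mem_cons_of_mem (count_pos.1 ?_)
  rw [count_erase_self]
  omega

theorem smallest_le_of_mem_addToSmallest (hm : n + k = m) {t : ℕ}
    (ht : t ∈ (h.addToSmallest hm).parts) : h.smallest ≤ t := by
  rw [parts_addToSmallest] at ht
  rcases mem_cons.1 ht with rfl | ht
  · omega
  · exact h.smallest_le (mem_of_mem_erase ht)

theorem largestExceedsSmallestBy_addToSmallest (hm : n + k = m) (hnk : n ≤ k) :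
    (h.addToSmallest hm).LargestExceedsSmallestBy k := by
  refine ⟨_, mem_cons_self _ _, _, h.smallest_mem_addToSmallest hm, fun t ht => ?_,
    fun t => h.smallest_le_of_mem_addToSmallest hm, rfl⟩
  rcases mem_cons.1 ht with rfl | ht
  · rfl
  · have htn := le_of_mem_parts (mem_of_mem_erase ht)
    have hpos := π.parts_pos h.smallest_mem
    omega

end HasRepeatedSmallestPart

namespace LargestExceedsSmallestBy

variable {π : m.Partition} (h : π.LargestExceedsSmallestBy k)

noncomputable def smallest : ℕ := h.choose_spec.2.choose

theorem smallest_mem : h.smallest ∈ π.parts := h.choose_spec.2.choose_spec.1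

theorem smallest_le {t : ℕ} (ht : t ∈ π.parts) : h.smallest ≤ t :=
  h.choose_spec.2.choose_spec.2.2.1 t ht

theorem smallest_add_mem : h.smallest + k ∈ π.parts :=
  h.choose_spec.2.choose_spec.2.2.2 ▸ h.choose_spec.1

theorem smallest_eq {s : ℕ} (hs : s ∈ π.parts) (hmin : ∀ t ∈ π.parts, s ≤ t) :
    h.smallest = s :=
  le_antisymm (h.smallest_le hs) (hmin _ h.smallest_mem)

noncomputable def subFromLargest (hm : n + k = m) : n.Partition :=
  π.replacePart h.smallest_add_mem (π.parts_pos h.smallest_mem) (by omega)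

theorem parts_subFromLargest (hm : n + k = m) :
    (h.subFromLargest hm).parts = h.smallest ::ₘ π.parts.erase (h.smallest + k) :=
  rfl

theorem smallest_le_of_mem_subFromLargest (hm : n + k = m) {t : ℕ}
    (ht : t ∈ (h.subFromLargest hm).parts) : h.smallest ≤ t := by
  rw [parts_subFromLargest] at ht
  rcases mem_cons.1 ht with rfl | ht
  · rfl
  · exact h.smallest_le (mem_of_mem_erase ht)

theorem hasRepeatedSmallestPart_subFromLargest (hm : n + k = m) (hk : 0 < k) :
    (h.subFromLargest hm).HasRepeatedSmallestPart := by
  refine ⟨_, mem_cons_self _ _, fun t => h.smallest_le_of_mem_subFromLargest hm, ?_⟩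
  have hpos := count_pos.2 h.smallest_mem
  rw [parts_subFromLargest, count_cons_self, count_erase_of_ne (by omega)]
  omega

end LargestExceedsSmallestBy

theorem subFromLargest_addToSmallest {π : n.Partition} (h : π.HasRepeatedSmallestPart)
    (hm : n + k = m) (h' : (h.addToSmallest hm).LargestExceedsSmallestBy k) :
    h'.subFromLargest hm = π := by
  have hs : h'.smallest = h.smallest :=
    h'.smallest_eq (h.smallest_mem_addToSmallest hm) fun _ =>
      h.smallest_le_of_mem_addToSmallest hm
  ext1
  rw [h'.parts_subFromLargest, hs, h.parts_addToSmallest, erase_cons_head,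
    cons_erase h.smallest_mem]

theorem addToSmallest_subFromLargest {σ : m.Partition} (h : σ.LargestExceedsSmallestBy k)
    (hm : n + k = m) (h' : (h.subFromLargest hm).HasRepeatedSmallestPart) :
    h'.addToSmallest hm = σ := by
  have hs : h'.smallest = h.smallest :=
    h'.smallest_eq (mem_cons_self _ _) fun _ => h.smallest_le_of_mem_subFromLargest hm
  ext1
  rw [h'.parts_addToSmallest, hs, h.parts_subFromLargest, erase_cons_head,
    cons_erase h.smallest_add_mem]

noncomputable def addToSmallestEquiv (hk : 0 < k) (hnk : n ≤ k) (hm : n + k = m) :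
    {π : n.Partition // π.HasRepeatedSmallestPart} ≃
      {σ : m.Partition // σ.LargestExceedsSmallestBy k} where
  toFun π := ⟨π.2.addToSmallest hm, π.2.largestExceedsSmallestBy_addToSmallest hm hnk⟩
  invFun σ := ⟨σ.2.subFromLargest hm, σ.2.hasRepeatedSmallestPart_subFromLargest hm hk⟩
  left_inv π := Subtype.ext (subFromLargest_addToSmallest π.2 hm _)
  right_inv σ := Subtype.ext (addToSmallest_subFromLargest σ.2 hm _)

theorem parts_addToSmallestEquiv (hk : 0 < k) (hnk : n ≤ k) (hm : n + k = m)
    (π : {π : n.Partition // π.HasRepeatedSmallestPart}) :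
    (addToSmallestEquiv hk hnk hm π).1.parts =
      (π.2.smallest + k) ::ₘ π.1.parts.erase π.2.smallest :=
  rfl

end Nat.Partition

/-- There is a bijection between the partitions of `n` whose smallest part occurs at least
twice and the partitions of `2n` whose largest part exceeds its smallest part by `n`,
given by adding `n` to one copy of the smallest part. -/
theorem stmt_5 (n : ℕ) (hn : 0 < n) :
    ∃ e : {π : n.Partition //
        ∃ s ∈ π.parts, (∀ t ∈ π.parts, s ≤ t) ∧ 2 ≤ π.parts.count s}
      ≃ {π : (2 * n).Partition //
        ∃ M ∈ π.parts, ∃ s ∈ π.parts,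
          (∀ t ∈ π.parts, t ≤ M) ∧ (∀ t ∈ π.parts, s ≤ t) ∧ M = s + n},
      ∀ π s, s ∈ π.1.parts → (∀ t ∈ π.1.parts, s ≤ t) →
        ((e π : {π : (2 * n).Partition //
            ∃ M ∈ π.parts, ∃ s ∈ π.parts,
              (∀ t ∈ π.parts, t ≤ M) ∧ (∀ t ∈ π.parts, s ≤ t) ∧ M = s + n})
          : (2 * n).Partition).parts
          = (s + n) ::ₘ π.1.parts.erase s := by
  refine ⟨Nat.Partition.addToSmallestEquiv hn le_rfl (two_mul n).symm, fun π s hs hmin => ?_⟩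
  rw [← Nat.Partition.HasRepeatedSmallestPart.smallest_eq π.2 hs hmin]
  exact Nat.Partition.parts_addToSmallestEquiv hn le_rfl _ π
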